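/- Let $l_1, \dots, l_N$ be complex numbers such that every consecutive product $l_j l_{j+1} \cdots l_k \neq 1$ for $1 \le j \le k \le N$. Then for every $L \geq 1$, $\sum_{0 \le x_1 \le \cdots \le x_N \le L-1} \prod_{i=1}^N l_i^{x_i} = \sum_{j=0}^N \frac{(-1)^j \prod_{k=j+1}^N l_k^L \, l_k^{N-k}}{\prod_{k=j+1}^N \left(\prod_{o=j+1}^k l_o - 1\right) \cdot \prod_{k=1}^j \left(\prod_{o=k}^j l_o - 1\right)}$. -/

import Mathlib

open Complex Finset

/-- The kinematical sum over weakly increasing `N`-tuples of positions in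
`{0, …, L-1}`, with 1-based particle labels: particle `i : Fin N` carries the
amplitude `l (i+1)`. -/
noncomputable def Bweak (N L : ℕ) (l : ℕ → ℂ) : ℂ :=
  ∑ x ∈ (Fintype.piFinset fun _ : Fin N => Finset.range L).filter
      (fun x => ∀ i j : Fin N, i ≤ j → x i ≤ x j),
    ∏ i : Fin N, l ((i : ℕ) + 1) ^ x i

/-!
Both sides satisfy the recursion
`(l (M+1) - 1) * B (M+1) l = l (M+1) ^ L * B M l - B M l'`, where `l'` merges the amplitudes
`l M` and `l (M+1)` into `l M * l (M+1)`, and both equal `1` for `M = 0`.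
For the kinematical sum, fix the first `M` positions and sum the geometric series in the last
position, which runs from the previous one (`y_M`) to `L - 1`: the lower end contributes
`l (M+1) ^ y_M`, which is absorbed into `l M ^ y_M`.
For the closed form, the recursion holds term by term for `j < M`, while the two top terms
`j = M, M+1` at level `M+1` combine into the top term at level `M`.
-/

section Merge

variable {α : Type*} [CommMonoid α] (l : ℕ → α) {M a b : ℕ}

def mergeAt (M : ℕ) : ℕ → α := Function.update l M (l M * l (M + 1))

lemma mergeAt_self : mergeAt l M M = l M * l (M + 1) := Function.update_self _ _ _

lemma mergeAt_of_ne {k : ℕ} (hk : k ≠ M) : mergeAt l M k = l k := Function.update_of_ne hk _ _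

lemma prod_Icc_mergeAt_of_lt (hb : b < M) :
    ∏ o ∈ Icc a b, mergeAt l M o = ∏ o ∈ Icc a b, l o :=
  prod_congr rfl fun o ho => mergeAt_of_ne l (by grind)

lemma prod_Icc_mergeAt_self (ha : a ≤ M) :
    ∏ o ∈ Icc a M, mergeAt l M o = ∏ o ∈ Icc a (M + 1), l o := by
  have hM : M ∈ Icc a M := mem_Icc.2 ⟨ha, le_rfl⟩
  rw [mergeAt, prod_update_of_mem hM, prod_Icc_succ_top (by omega), ← mul_prod_erase _ _ hM,
    sdiff_singleton_eq_erase]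
  ac_rfl

lemma prod_pow_mergeAt {y : Fin M → ℕ} (hy : Monotone y) :
    ∏ i : Fin M, mergeAt l M (i + 1) ^ y i
      = (∏ i : Fin M, l (i + 1) ^ y i) * l (M + 1) ^ univ.sup y := by
  cases M with
  | zero => simp
  | succ m =>
    have hsup : univ.sup y = y (Fin.last m) :=
      le_antisymm (Finset.sup_le fun i _ => hy (Fin.le_last i)) (le_sup (mem_univ _))
    have hlow : ∀ i : Fin m, mergeAt l (m + 1) (i.castSucc + 1) = l (i.castSucc + 1) :=
      fun i => mergeAt_of_ne l (by simp [i.is_lt.ne])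
    simp only [Fin.prod_univ_castSucc, hlow, Fin.val_last, mergeAt_self, hsup, mul_pow]
    ac_rfl

end Merge

lemma Fin.monotone_snoc_iff {α : Type*} [Preorder α] {n : ℕ} {y : Fin n → α} {t : α} :
    Monotone (Fin.snoc y t : Fin (n + 1) → α) ↔ Monotone y ∧ ∀ i, y i ≤ t := by
  refine ⟨fun h => ⟨fun i j hij => ?_, fun i => ?_⟩, fun ⟨hy, hyt⟩ i j hij => ?_⟩
  · simpa using h (Fin.castSucc_le_castSucc_iff.2 hij)
  · simpa using h (Fin.castSucc_lt_last i).le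
  · induction j using Fin.lastCases with
    | last => induction i using Fin.lastCases <;> simp [hyt]
    | cast j =>
      induction i using Fin.lastCases with
      | last => exact absurd hij (Fin.castSucc_lt_last j).not_ge
      | cast i => simpa using hy (Fin.castSucc_le_castSucc_iff.1 hij)

def monotoneTuples (N L : ℕ) : Finset (Fin N → ℕ) :=
  (Fintype.piFinset fun _ : Fin N => range L).filter (fun x => ∀ i j : Fin N, i ≤ j → x i ≤ x j)

lemma mem_monotoneTuples {N L : ℕ} {x : Fin N → ℕ} :
    x ∈ monotoneTuples N L ↔ (∀ i, x i < L) ∧ Monotone x := by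
  simp [monotoneTuples, Monotone]

lemma snoc_mem_monotoneTuples {M L : ℕ} {y : Fin M → ℕ} {t : ℕ} :
    Fin.snoc y t ∈ monotoneTuples (M + 1) L ↔
      y ∈ monotoneTuples M L ∧ t ∈ Ico (univ.sup y) L := by
  simp only [mem_monotoneTuples, Fin.monotone_snoc_iff, Fin.forall_fin_succ', Fin.snoc_castSucc,
    Fin.snoc_last, mem_Ico, Finset.sup_le_iff, mem_univ, true_imp_iff]
  tauto

-- `univ.sup y` is the last entry of `y`, or `0` for the empty tuple.
lemma sum_monotoneTuples_succ {β : Type*} [AddCommMonoid β] (M L : ℕ)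
    (f : (Fin (M + 1) → ℕ) → β) :
    ∑ x ∈ monotoneTuples (M + 1) L, f x
      = ∑ y ∈ monotoneTuples M L, ∑ t ∈ Ico (univ.sup y) L, f (Fin.snoc y t) := by
  rw [sum_sigma']
  refine sum_nbij' (fun x => ⟨Fin.init x, x (Fin.last M)⟩) (fun p => Fin.snoc p.1 p.2)
    ?_ ?_ (fun x _ => by simp) (fun p _ => by simp) (fun x _ => by simp)
  · intro x hx
    rw [← Fin.snoc_init_self x, snoc_mem_monotoneTuples] at hx
    simpa using hx
  · rintro ⟨y, t⟩ h
    exact snoc_mem_monotoneTuples.2 (mem_sigma.1 h)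

lemma Bweak_succ_mul (M L : ℕ) (l : ℕ → ℂ) :
    (l (M + 1) - 1) * Bweak (M + 1) L l
      = l (M + 1) ^ L * Bweak M L l - Bweak M L (mergeAt l M) := by
  change _ * ∑ x ∈ monotoneTuples (M + 1) L, _
    = _ * ∑ y ∈ monotoneTuples M L, _ - ∑ y ∈ monotoneTuples M L, _
  rw [sum_monotoneTuples_succ, mul_sum, mul_sum, ← sum_sub_distrib]
  refine sum_congr rfl fun y hy => ?_
  obtain ⟨hlt, hmono⟩ := mem_monotoneTuples.1 hy
  have hsup : univ.sup y ≤ L := Finset.sup_le fun i _ => (hlt i).le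
  simp only [Fin.prod_univ_castSucc, Fin.snoc_castSucc, Fin.snoc_last, Fin.val_castSucc,
    Fin.val_last, ← mul_sum]
  rw [prod_pow_mergeAt l hmono, mul_left_comm, mul_comm (l (M + 1) - 1), geom_sum_Ico_mul _ hsup]
  ring

section ClosedForm

def ConsecutiveProdsNeOne {α : Type*} [CommMonoid α] (N : ℕ) (l : ℕ → α) : Prop :=
  ∀ j k : ℕ, 1 ≤ j → j ≤ k → k ≤ N → ∏ o ∈ Icc j k, l o ≠ 1

lemma ConsecutiveProdsNeOne.mono {α : Type*} [CommMonoid α] {M N : ℕ} {l : ℕ → α}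
    (h : ConsecutiveProdsNeOne N l) (hMN : M ≤ N) : ConsecutiveProdsNeOne M l :=
  fun j k hj hjk hk => h j k hj hjk (hk.trans hMN)

lemma ConsecutiveProdsNeOne.mergeAt {α : Type*} [CommMonoid α] {M : ℕ} {l : ℕ → α}
    (h : ConsecutiveProdsNeOne (M + 1) l) : ConsecutiveProdsNeOne M (mergeAt l M) := by
  intro j k hj hjk hk
  rcases hk.lt_or_eq with hk | rfl
  · rw [prod_Icc_mergeAt_of_lt l hk]
    exact h j k hj hjk (by omega)
  · rw [prod_Icc_mergeAt_self l hjk]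
    exact h j (k + 1) hj (by omega) le_rfl

variable {K : Type*} [Field K] {M N L j : ℕ} {l : ℕ → K}

def suffixNum (N L : ℕ) (l : ℕ → K) (j : ℕ) : K := ∏ k ∈ Icc (j + 1) N, l k ^ L * l k ^ (N - k)

def suffixDen (N : ℕ) (l : ℕ → K) (j : ℕ) : K :=
  ∏ k ∈ Icc (j + 1) N, ((∏ o ∈ Icc (j + 1) k, l o) - 1)

def prefixDen (l : ℕ → K) (j : ℕ) : K := ∏ k ∈ Icc 1 j, ((∏ o ∈ Icc k j, l o) - 1)

def closedFormTerm (N L : ℕ) (l : ℕ → K) (j : ℕ) : K :=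
  (-1) ^ j * suffixNum N L l j / (suffixDen N l j * prefixDen l j)

def closedForm (N L : ℕ) (l : ℕ → K) : K := ∑ j ∈ range (N + 1), closedFormTerm N L l j

lemma ConsecutiveProdsNeOne.sub_one_ne_zero (h : ConsecutiveProdsNeOne (M + 1) l) :
    l (M + 1) - 1 ≠ 0 :=
  sub_ne_zero.2 (by simpa using h (M + 1) (M + 1) (by omega) le_rfl le_rfl)

lemma suffixDen_ne_zero (h : ConsecutiveProdsNeOne N l) (j : ℕ) : suffixDen N l j ≠ 0 :=
  prod_ne_zero_iff.2 fun k hk => sub_ne_zero.2 <| by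
    rw [mem_Icc] at hk
    exact h _ _ (by omega) hk.1 hk.2

lemma prefixDen_ne_zero (h : ConsecutiveProdsNeOne N l) (hj : j ≤ N) : prefixDen l j ≠ 0 :=
  prod_ne_zero_iff.2 fun k hk => sub_ne_zero.2 <| by
    rw [mem_Icc] at hk
    exact h _ _ hk.1 hk.2 hj

lemma suffixNum_succ (hj : j ≤ M) :
    suffixNum (M + 1) L l j = suffixNum M L l j * (∏ o ∈ Icc (j + 1) M, l o) * l (M + 1) ^ L := by
  rw [suffixNum, suffixNum, prod_Icc_succ_top (by omega), Nat.sub_self, pow_zero, mul_one,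
    ← prod_mul_distrib]
  congr 1
  refine prod_congr rfl fun k hk => ?_
  rw [mem_Icc] at hk
  rw [Nat.sub_add_comm hk.2, pow_succ]
  ring

lemma suffixNum_mergeAt (hj : j < M) :
    suffixNum M L (mergeAt l M) j = suffixNum M L l j * l (M + 1) ^ L := by
  have hM : M ∈ Icc (j + 1) M := mem_Icc.2 ⟨hj, le_rfl⟩
  rw [suffixNum, suffixNum, ← mul_prod_erase _ _ hM, ← mul_prod_erase _ _ hM, mergeAt_self,
    prod_congr rfl fun k hk => by rw [mergeAt_of_ne l (ne_of_mem_erase hk)], Nat.sub_self,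
    pow_zero]
  ring

lemma suffixDen_succ (hj : j ≤ M) :
    suffixDen (M + 1) l j = suffixDen M l j * ((∏ o ∈ Icc (j + 1) M, l o) * l (M + 1) - 1) := by
  rw [suffixDen, suffixDen, prod_Icc_succ_top (by omega), prod_Icc_succ_top (by omega)]

lemma suffixDen_mergeAt_mul (hj : j < M) :
    suffixDen M (mergeAt l M) j * ((∏ o ∈ Icc (j + 1) M, l o) - 1) = suffixDen (M + 1) l j := by
  have hM : M ∈ Icc (j + 1) M := mem_Icc.2 ⟨hj, le_rfl⟩
  have hlow : ∀ k ∈ (Icc (j + 1) M).erase M,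
      (∏ o ∈ Icc (j + 1) k, mergeAt l M o) - 1 = (∏ o ∈ Icc (j + 1) k, l o) - 1 := fun k hk => by
    rw [prod_Icc_mergeAt_of_lt l (lt_of_le_of_ne (mem_Icc.1 (mem_of_mem_erase hk)).2
      (ne_of_mem_erase hk))]
  rw [suffixDen, suffixDen, prod_Icc_succ_top (by omega),
    ← mul_prod_erase _ (fun k => (∏ o ∈ Icc (j + 1) k, mergeAt l M o) - 1) hM,
    ← mul_prod_erase _ (fun k => (∏ o ∈ Icc (j + 1) k, l o) - 1) hM, prod_congr rfl hlow,
    prod_Icc_mergeAt_self l hj]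
  ring

lemma prefixDen_mergeAt (hj : j < M) : prefixDen (mergeAt l M) j = prefixDen l j :=
  prod_congr rfl fun k _ => by rw [prod_Icc_mergeAt_of_lt l hj]

lemma prefixDen_succ (M : ℕ) :
    prefixDen l (M + 1) = prefixDen (mergeAt l M) M * (l (M + 1) - 1) := by
  rw [prefixDen, prefixDen, prod_Icc_succ_top (by omega), Icc_self, prod_singleton]
  congr 1
  exact prod_congr rfl fun k hk => by rw [prod_Icc_mergeAt_self l (mem_Icc.1 hk).2]

lemma suffixNum_self : suffixNum N L l N = 1 := by simp [suffixNum]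

lemma suffixDen_self : suffixDen N l N = 1 := by simp [suffixDen]

lemma closedFormTerm_succ_mul (h : ConsecutiveProdsNeOne (M + 1) l) (hj : j < M) :
    (l (M + 1) - 1) * closedFormTerm (M + 1) L l j
      = l (M + 1) ^ L * closedFormTerm M L l j - closedFormTerm M L (mergeAt l M) j := by
  simp only [closedFormTerm]
  rw [suffixNum_succ hj.le, suffixDen_succ hj.le, suffixNum_mergeAt hj, prefixDen_mergeAt hj]
  set x := ∏ o ∈ Icc (j + 1) M, l o
  have hx : x - 1 ≠ 0 := sub_ne_zero.2 (h _ _ (by omega) hj (by omega))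
  have hxq : l (M + 1) * x - 1 ≠ 0 := sub_ne_zero.2 <| by
    rw [mul_comm, ← prod_Icc_succ_top (by omega)]
    exact h _ _ (by omega) (by omega) le_rfl
  have hd := suffixDen_ne_zero (h.mono M.le_succ) j
  have hD := prefixDen_ne_zero h (j := j) (by omega)
  have hd' : suffixDen M (mergeAt l M) j = suffixDen M l j * (x * l (M + 1) - 1) / (x - 1) := by
    rw [eq_div_iff hx, suffixDen_mergeAt_mul hj, suffixDen_succ hj.le]
  rw [hd']
  field_simp
  ring

lemma closedFormTerm_top_mul (h : ConsecutiveProdsNeOne (M + 1) l) :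
    (l (M + 1) - 1) * (closedFormTerm (M + 1) L l M + closedFormTerm (M + 1) L l (M + 1))
      = l (M + 1) ^ L * closedFormTerm M L l M - closedFormTerm M L (mergeAt l M) M := by
  have hq := h.sub_one_ne_zero
  have hD := prefixDen_ne_zero h M.le_succ
  have hD' := prefixDen_ne_zero h.mergeAt (le_refl M)
  simp only [closedFormTerm]
  rw [suffixNum_succ le_rfl, suffixDen_succ le_rfl, prefixDen_succ M]
  simp only [suffixNum_self, suffixDen_self, Icc_eq_empty_of_lt (Nat.lt_succ_self M), prod_empty]
  field_simp
  ring

lemma closedForm_succ_mul (h : ConsecutiveProdsNeOne (M + 1) l) :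
    (l (M + 1) - 1) * closedForm (M + 1) L l
      = l (M + 1) ^ L * closedForm M L l - closedForm M L (mergeAt l M) := by
  simp only [closedForm]
  rw [sum_range_succ _ (M + 1), sum_range_succ, sum_range_succ, sum_range_succ, add_assoc, mul_add,
    closedFormTerm_top_mul h, mul_sum, mul_add, mul_sum, sum_congr rfl fun j hj =>
    closedFormTerm_succ_mul h (mem_range.1 hj), sum_sub_distrib]
  ring

end ClosedForm

theorem Bweak_eq_closedForm {N : ℕ} {l : ℕ → ℂ} (h : ConsecutiveProdsNeOne N l) (L : ℕ) :
    Bweak N L l = closedForm N L l := by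
  induction N generalizing l with
  | zero => simp [Bweak, closedForm, closedFormTerm, suffixNum, suffixDen, prefixDen]
  | succ M ih =>
    refine mul_left_cancel₀ h.sub_one_ne_zero ?_
    rw [Bweak_succ_mul, closedForm_succ_mul h, ih (h.mono M.le_succ), ih h.mergeAt]

theorem weak_closed_form_general (N : ℕ) (l : ℕ → ℂ)
    (hzf : ∀ j k : ℕ, 1 ≤ j → j ≤ k → k ≤ N → ∏ o ∈ Finset.Icc j k, l o ≠ 1)
    (L : ℕ) :
    Bweak N L l =
      ∑ j ∈ Finset.range (N + 1),
        ((-1 : ℂ) ^ j * ∏ k ∈ Finset.Icc (j + 1) N, l k ^ L * l k ^ (N - k))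
          / ((∏ k ∈ Finset.Icc (j + 1) N, ((∏ o ∈ Finset.Icc (j + 1) k, l o) - 1))
              * ∏ k ∈ Finset.Icc 1 j, ((∏ o ∈ Finset.Icc k j, l o) - 1)) :=
  Bweak_eq_closedForm hzf L

theorem weak_closed_form (N : ℕ) (l : ℕ → ℂ)
    (hzf : ∀ j k : ℕ, 1 ≤ j → j ≤ k → k ≤ N → ∏ o ∈ Finset.Icc j k, l o ≠ 1)
    (L : ℕ) (hL : 1 ≤ L) :
    Bweak N L l =
      ∑ j ∈ Finset.range (N + 1),
        ((-1 : ℂ) ^ j * ∏ k ∈ Finset.Icc (j + 1) N, l k ^ L * l k ^ (N - k))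
          / ((∏ k ∈ Finset.Icc (j + 1) N, ((∏ o ∈ Finset.Icc (j + 1) k, l o) - 1))
              * ∏ k ∈ Finset.Icc 1 j, ((∏ o ∈ Finset.Icc k j, l o) - 1)) :=
  weak_closed_form_general N l hzf L
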